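/- arXiv:2109.13190 — 3 statements merged into one kernel-verified Lean document; each statement's English description precedes it below -/
import Mathlib

section
/- In the covering setting, for every ε > 0 there exists a finite set F of bounded functions ℝ^{2d} → ℝ with cardinality at most max(1, (2 L_K S_f (h₁^{−1}+h₂^{−1}) diam(D) / ε)^{2d}) such that for every g ∈ 𝒢 there is φ ∈ F with sup_{z∈ℝ^{2d}} |f(z) g(z) − φ(z)| ≤ ε; that is, the covering number of 𝒢f with respect to the sup-norm distance satisfies 𝒩(ε, 𝒢f, d_∞) ≤ max(1, (2 L_K S_f (h₁^{−1}+h₂^{−1}) diam(D) / ε)^{2d}). -/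
open MeasureTheory ProbabilityTheory Filter Set

noncomputable section

abbrev Ed (d : ℕ) := EuclideanSpace ℝ (Fin d)
abbrev Ed2 (d : ℕ) := Ed d × Ed d

/-- Points of `ℝ^{2d}` with all coordinates rational. -/
def ratPoints (d : ℕ) : Set (Ed2 d) :=
  {z | (∀ i, ∃ q : ℚ, z.1 i = (q : ℝ)) ∧ ∀ i, ∃ q : ℚ, z.2 i = (q : ℝ)}

/-- Sup-norm of a real-valued function. -/
noncomputable def supNorm {α : Type*} (g : α → ℝ) : ℝ := ⨆ x, |g x|

/-- The kernel translate `w ↦ K₁((x−w₁)/h₁) K₂((y−w₂)/h₂)` centered at `zc = (x,y)`. -/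
noncomputable def Gfun (d : ℕ) (K₁ K₂ : Ed d → ℝ) (h₁ h₂ : ℝ) (zc : Ed2 d) :
    Ed2 d → ℝ :=
  fun w => K₁ (h₁⁻¹ • (zc.1 - w.1)) * K₂ (h₂⁻¹ • (zc.2 - w.2))

/-- The class `𝒢 = {K((x−·)/h₁, (y−·)/h₂) : (x,y) ∈ D ∩ ℚ^{2d}}`. -/
noncomputable def Gclass (d : ℕ) (K₁ K₂ : Ed d → ℝ) (h₁ h₂ : ℝ) (D : Set (Ed2 d)) :
    Set (Ed2 d → ℝ) :=
  Gfun d K₁ K₂ h₁ h₂ '' (D ∩ ratPoints d)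

/-- `𝒦`: the union of the supports of the elements of `𝒢`. -/
noncomputable def bigK (d : ℕ) (K₁ K₂ : Ed d → ℝ) (h₁ h₂ : ℝ) (D : Set (Ed2 d)) :
    Set (Ed2 d) :=
  ⋃ g ∈ Gclass d K₁ K₂ h₁ h₂ D, Function.support g

/-- `S_f = sup_{z ∈ 𝒦} |f(z)|`. -/
noncomputable def Sf (d : ℕ) (K₁ K₂ : Ed d → ℝ) (h₁ h₂ : ℝ) (D : Set (Ed2 d))
    (f : Ed2 d → ℝ) : ℝ :=
  ⨆ z : ↥(bigK d K₁ K₂ h₁ h₂ D), |f (z : Ed2 d)|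

/-- `L_K = L₁‖K₂‖_∞ + L₂‖K₁‖_∞`. -/
noncomputable def LK (d : ℕ) (K₁ K₂ : Ed d → ℝ) (L₁ L₂ : ℝ) : ℝ :=
  L₁ * supNorm K₂ + L₂ * supNorm K₁

/-- Euclidean diameter of `D ⊂ ℝ^d × ℝ^d`. -/
noncomputable def diamE (d : ℕ) (D : Set (Ed2 d)) : ℝ :=
  sSup {r : ℝ | ∃ z ∈ D, ∃ w ∈ D, r = Real.sqrt (‖z.1 - w.1‖ ^ 2 + ‖z.2 - w.2‖ ^ 2)}

/-! The translates `g_z` are Lipschitz in the centre `z`, with constant `L_K (h₁⁻¹ + h₂⁻¹)` for the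
coordinatewise sup-distance between centres, and multiplying by `f` costs a factor `S_f` on the
union `𝒦` of their supports. So centres within `δ = ε / (L_K S_f (h₁⁻¹ + h₂⁻¹))` of each other give
`ε`-close functions `f g_z`. The rational points of `D` have all `2d` coordinates in intervals of
length `2 diam(D)`; a grid of `m` cells per coordinate with `m ≈ diam(D) / δ` gives `m^{2d}` centres. -/

lemma le_ciSup_of_iSup_pos {ι : Type*} {g : ι → ℝ} (hg : 0 < ⨆ i, g i) (i : ι) :
    g i ≤ ⨆ i, g i :=
  -- a positive value rules out the junk value `0` of an unbounded supremum
  le_ciSup (not_not.mp fun h => hg.ne' (Real.iSup_of_not_bddAbove h)) i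

lemma abs_le_supNorm {α : Type*} {g : α → ℝ} (hg : ∃ C, ∀ x, |g x| ≤ C) (x : α) :
    |g x| ≤ supNorm g := by
  obtain ⟨C, hC⟩ := hg
  exact le_ciSup ⟨C, Set.forall_mem_range.2 hC⟩ x

lemma supNorm_nonneg {α : Type*} (g : α → ℝ) : 0 ≤ supNorm g :=
  Real.iSup_nonneg fun _ => abs_nonneg _

lemma abs_mul_sub_mul_le {a a' b b' A B : ℝ} (ha' : |a'| ≤ A) (hb : |b| ≤ B) :
    |a * b - a' * b'| ≤ |a - a'| * B + A * |b - b'| :=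
  calc |a * b - a' * b'| = |(a - a') * b + a' * (b - b')| := by congr 1; ring
    _ ≤ |a - a'| * |b| + |a'| * |b - b'| := by
      rw [← abs_mul, ← abs_mul]; exact abs_add_le _ _
    _ ≤ |a - a'| * B + A * |b - b'| := by gcongr

lemma exists_abs_sub_cell_midpoint_le {a s t : ℝ} {m : ℕ} (hm : 0 < m) (hs : 0 ≤ s)
    (hat : a ≤ t) (hta : t ≤ a + m * s) :
    ∃ k : Fin m, |t - (a + (k + 1 / 2) * s)| ≤ s / 2 := by
  suffices ∃ k : Fin m, k * s ≤ t - a ∧ t - a ≤ (k + 1) * s by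
    obtain ⟨k, hk₁, hk₂⟩ := this
    exact ⟨k, abs_le.2 ⟨by linarith, by linarith⟩⟩
  rcases hs.eq_or_lt with rfl | hs
  · exact ⟨⟨0, hm⟩, by simp at hta ⊢; constructor <;> linarith⟩
  have hu : 0 ≤ (t - a) / s := div_nonneg (by linarith) hs.le
  have hum : (t - a) / s ≤ m := by rw [div_le_iff₀ hs]; linarith
  refine ⟨⟨min ⌊(t - a) / s⌋₊ (m - 1), by omega⟩, ?_, ?_⟩
  · rw [← le_div_iff₀ hs]
    exact (Nat.cast_le.2 (min_le_left _ _)).trans (Nat.floor_le hu)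
  · dsimp only
    rw [← div_le_iff₀ hs]
    rcases le_total ⌊(t - a) / s⌋₊ (m - 1) with h | h
    · rw [min_eq_left h]; exact (Nat.lt_floor_add_one _).le
    · rw [min_eq_right h, Nat.cast_sub hm]; push_cast; linarith

lemma exists_finset_card_le_forall_abs_sub_le {ι : Type*} [Fintype ι] (S : Set (ι → ℝ))
    {Δ : ℝ} (hS : ∀ x ∈ S, ∀ y ∈ S, ∀ i, |x i - y i| ≤ Δ) {m : ℕ} (hm : 0 < m) :
    ∃ T : Finset (ι → ℝ), T.card ≤ m ^ Fintype.card ι ∧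
      ∀ x ∈ S, ∃ y ∈ T, ∀ i, |x i - y i| ≤ Δ / m := by
  classical
  rcases S.eq_empty_or_nonempty with rfl | ⟨c, hc⟩
  · exact ⟨∅, by simp, by simp⟩
  have hm' : (0 : ℝ) < m := Nat.cast_pos.2 hm
  set s := 2 * Δ / m
  let gridPoint : (ι → Fin m) → ι → ℝ := fun k i => c i - Δ + (k i + 1 / 2) * s
  refine ⟨Finset.univ.image gridPoint, ?_, fun x hx => ?_⟩
  · exact Finset.card_image_le.trans (by simp)
  have hcell : ∀ i, ∃ k : Fin m, |x i - gridPoint (fun _ => k) i| ≤ s / 2 := fun i =>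
    have hxc := abs_le.1 (hS x hx c hc i)
    have hΔ : 0 ≤ Δ := (abs_nonneg _).trans (hS c hc c hc i)
    exists_abs_sub_cell_midpoint_le hm (by positivity) (by linarith)
      (by simp only [s]; rw [mul_div_cancel₀ _ hm'.ne']; linarith)
  choose k hk using hcell
  refine ⟨gridPoint k, Finset.mem_image_of_mem _ (Finset.mem_univ _), fun i => ?_⟩
  calc |x i - gridPoint k i| ≤ s / 2 := hk i
    _ = Δ / m := by ring

lemma exists_nat_pos_half_le_pow_le_max (X : ℝ) (n : ℕ) :
    ∃ m : ℕ, 0 < m ∧ X / 2 ≤ m ∧ (m : ℝ) ^ n ≤ max 1 (X ^ n) := by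
  rcases le_or_gt X 2 with hX | hX
  · exact ⟨1, one_pos, by push_cast; linarith, by simp⟩
  refine ⟨⌈X / 2⌉₊, Nat.ceil_pos.2 (by linarith), Nat.le_ceil _, le_max_of_le_right ?_⟩
  have := Nat.ceil_lt_add_one (show 0 ≤ X / 2 by linarith)
  exact pow_le_pow_left₀ (Nat.cast_nonneg _) (by linarith) n

lemma abs_sub_le_of_forall_abs_sub_le {ι : Type*} [Fintype ι] {K : EuclideanSpace ℝ ι → ℝ}
    {L : ℝ} (hL : 0 ≤ L) (hK : ∀ v w : EuclideanSpace ℝ ι, |K v - K w| ≤ L * ⨆ i, |v i - w i|)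
    {h δ : ℝ} (hh : 0 < h) (hδ : 0 ≤ δ) {x y : EuclideanSpace ℝ ι} (hxy : ∀ i, |x i - y i| ≤ δ)
    (w : EuclideanSpace ℝ ι) :
    |K (h⁻¹ • (x - w)) - K (h⁻¹ • (y - w))| ≤ L * (h⁻¹ * δ) := by
  refine (hK _ _).trans (mul_le_mul_of_nonneg_left (Real.iSup_le (fun i => ?_) (by positivity)) hL)
  calc |(h⁻¹ • (x - w)) i - (h⁻¹ • (y - w)) i| = h⁻¹ * |x i - y i| := by
        simp only [PiLp.smul_apply, PiLp.sub_apply, smul_eq_mul, ← mul_sub, abs_mul,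
          abs_of_pos (inv_pos.2 hh)]
        ring_nf
    _ ≤ h⁻¹ * δ := by gcongr; exact hxy i

lemma abs_coord_sub_le_diamE {d : ℕ} {D : Set (Ed2 d)} (hD : Bornology.IsBounded D)
    {z w : Ed2 d} (hz : z ∈ D) (hw : w ∈ D) (i : Fin d) :
    |z.1 i - w.1 i| ≤ diamE d D ∧ |z.2 i - w.2 i| ≤ diamE d D := by
  obtain ⟨C, hC⟩ := Metric.isBounded_iff.1 hD
  have hbdd : BddAbove {r : ℝ | ∃ z ∈ D, ∃ w ∈ D,
      r = Real.sqrt (‖z.1 - w.1‖ ^ 2 + ‖z.2 - w.2‖ ^ 2)} := by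
    refine ⟨Real.sqrt (C ^ 2 + C ^ 2), ?_⟩
    rintro _ ⟨z, hz, w, hw, rfl⟩
    have h₁ : ‖z.1 - w.1‖ ≤ C := (norm_fst_le (z - w)).trans ((dist_eq_norm z w) ▸ hC hz hw)
    have h₂ : ‖z.2 - w.2‖ ≤ C := (norm_snd_le (z - w)).trans ((dist_eq_norm z w) ▸ hC hz hw)
    gcongr
  have hdiam := le_csSup hbdd ⟨z, hz, w, hw, rfl⟩
  constructor
  · calc |z.1 i - w.1 i| ≤ ‖z.1 - w.1‖ := PiLp.norm_apply_le (z.1 - w.1) i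
      _ ≤ _ := Real.le_sqrt_of_sq_le (le_add_of_nonneg_right (by positivity))
      _ ≤ diamE d D := hdiam
  · calc |z.2 i - w.2 i| ≤ ‖z.2 - w.2‖ := PiLp.norm_apply_le (z.2 - w.2) i
      _ ≤ _ := Real.le_sqrt_of_sq_le (le_add_of_nonneg_left (by positivity))
      _ ≤ diamE d D := hdiam

lemma diamE_nonneg (d : ℕ) (D : Set (Ed2 d)) : 0 ≤ diamE d D :=
  Real.sSup_nonneg fun _ ⟨_, _, _, _, hr⟩ => hr ▸ Real.sqrt_nonneg _

section KernelClass

variable {d : ℕ} {K₁ K₂ : Ed d → ℝ} {L₁ L₂ h₁ h₂ : ℝ} {D : Set (Ed2 d)} {f : Ed2 d → ℝ}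

/-- `f` is only controlled on `𝒦`, hence the cut-off; for centres in `D ∩ ℚ^{2d}` the cut-off
changes nothing. -/
def cutoffProd (d : ℕ) (K₁ K₂ : Ed d → ℝ) (h₁ h₂ : ℝ) (D : Set (Ed2 d)) (f : Ed2 d → ℝ)
    (p : Ed2 d) : Ed2 d → ℝ :=
  fun w => (bigK d K₁ K₂ h₁ h₂ D).indicator f w * Gfun d K₁ K₂ h₁ h₂ p w

lemma abs_Gfun_sub_le (hK₁b : ∃ C, ∀ v, |K₁ v| ≤ C) (hK₂b : ∃ C, ∀ v, |K₂ v| ≤ C)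
    (hL₁ : 0 ≤ L₁) (hL₂ : 0 ≤ L₂)
    (hK₁lip : ∀ v w : Ed d, |K₁ v - K₁ w| ≤ L₁ * ⨆ i, |v i - w i|)
    (hK₂lip : ∀ v w : Ed d, |K₂ v - K₂ w| ≤ L₂ * ⨆ i, |v i - w i|)
    (hh₁ : 0 < h₁) (hh₂ : 0 < h₂) {δ : ℝ} (hδ : 0 ≤ δ) {z p : Ed2 d}
    (hzp₁ : ∀ i, |z.1 i - p.1 i| ≤ δ) (hzp₂ : ∀ i, |z.2 i - p.2 i| ≤ δ) (w : Ed2 d) :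
    |Gfun d K₁ K₂ h₁ h₂ z w - Gfun d K₁ K₂ h₁ h₂ p w| ≤
      LK d K₁ K₂ L₁ L₂ * (h₁⁻¹ + h₂⁻¹) * δ := by
  have hS₁ := supNorm_nonneg K₁
  have hS₂ := supNorm_nonneg K₂
  calc |Gfun d K₁ K₂ h₁ h₂ z w - Gfun d K₁ K₂ h₁ h₂ p w|
      ≤ |K₁ (h₁⁻¹ • (z.1 - w.1)) - K₁ (h₁⁻¹ • (p.1 - w.1))| * supNorm K₂ +
          supNorm K₁ * |K₂ (h₂⁻¹ • (z.2 - w.2)) - K₂ (h₂⁻¹ • (p.2 - w.2))| :=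
        abs_mul_sub_mul_le (abs_le_supNorm hK₁b _) (abs_le_supNorm hK₂b _)
    _ ≤ L₁ * (h₁⁻¹ * δ) * supNorm K₂ + supNorm K₁ * (L₂ * (h₂⁻¹ * δ)) := by
        gcongr
        exacts [abs_sub_le_of_forall_abs_sub_le hL₁ hK₁lip hh₁ hδ hzp₁ _,
          abs_sub_le_of_forall_abs_sub_le hL₂ hK₂lip hh₂ hδ hzp₂ _]
    _ ≤ LK d K₁ K₂ L₁ L₂ * (h₁⁻¹ + h₂⁻¹) * δ := by
        have : 0 ≤ (L₁ * supNorm K₂ * h₂⁻¹ + L₂ * supNorm K₁ * h₁⁻¹) * δ := by positivity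
        rw [LK]
        linear_combination this

lemma abs_cutoffProd_le (hK₁b : ∃ C, ∀ v, |K₁ v| ≤ C) (hK₂b : ∃ C, ∀ v, |K₂ v| ≤ C)
    (hSf : 0 < Sf d K₁ K₂ h₁ h₂ D f) (p w : Ed2 d) :
    |cutoffProd d K₁ K₂ h₁ h₂ D f p w| ≤
      Sf d K₁ K₂ h₁ h₂ D f * (supNorm K₁ * supNorm K₂) := by
  have hf : |(bigK d K₁ K₂ h₁ h₂ D).indicator f w| ≤ Sf d K₁ K₂ h₁ h₂ D f := by
    by_cases hw : w ∈ bigK d K₁ K₂ h₁ h₂ D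
    · rw [Set.indicator_of_mem hw]
      exact le_ciSup_of_iSup_pos hSf (⟨w, hw⟩ : bigK d K₁ K₂ h₁ h₂ D)
    · rw [Set.indicator_of_notMem hw, abs_zero]
      exact hSf.le
  rw [cutoffProd, Gfun, abs_mul, abs_mul]
  exact mul_le_mul hf (mul_le_mul (abs_le_supNorm hK₁b _) (abs_le_supNorm hK₂b _)
    (abs_nonneg _) (supNorm_nonneg _)) (by positivity) hSf.le

lemma abs_mul_Gfun_sub_cutoffProd_le (hK₁b : ∃ C, ∀ v, |K₁ v| ≤ C)
    (hK₂b : ∃ C, ∀ v, |K₂ v| ≤ C) (hL₁ : 0 ≤ L₁) (hL₂ : 0 ≤ L₂)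
    (hK₁lip : ∀ v w : Ed d, |K₁ v - K₁ w| ≤ L₁ * ⨆ i, |v i - w i|)
    (hK₂lip : ∀ v w : Ed d, |K₂ v - K₂ w| ≤ L₂ * ⨆ i, |v i - w i|)
    (hh₁ : 0 < h₁) (hh₂ : 0 < h₂) (hSf : 0 < Sf d K₁ K₂ h₁ h₂ D f) {ε δ : ℝ} (hε : 0 ≤ ε)
    (hδ : 0 ≤ δ) (hδε : LK d K₁ K₂ L₁ L₂ * (h₁⁻¹ + h₂⁻¹) * δ * Sf d K₁ K₂ h₁ h₂ D f ≤ ε)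
    {z p : Ed2 d} (hz : z ∈ D ∩ ratPoints d)
    (hzp₁ : ∀ i, |z.1 i - p.1 i| ≤ δ) (hzp₂ : ∀ i, |z.2 i - p.2 i| ≤ δ) (w : Ed2 d) :
    |f w * Gfun d K₁ K₂ h₁ h₂ z w - cutoffProd d K₁ K₂ h₁ h₂ D f p w| ≤ ε := by
  by_cases hw : w ∈ bigK d K₁ K₂ h₁ h₂ D
  · rw [cutoffProd, Set.indicator_of_mem hw, ← mul_sub, abs_mul]
    calc |f w| * |Gfun d K₁ K₂ h₁ h₂ z w - Gfun d K₁ K₂ h₁ h₂ p w|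
        ≤ Sf d K₁ K₂ h₁ h₂ D f * (LK d K₁ K₂ L₁ L₂ * (h₁⁻¹ + h₂⁻¹) * δ) := by
          gcongr
          · exact le_ciSup_of_iSup_pos hSf (⟨w, hw⟩ : bigK d K₁ K₂ h₁ h₂ D)
          · exact abs_Gfun_sub_le hK₁b hK₂b hL₁ hL₂ hK₁lip hK₂lip hh₁ hh₂ hδ hzp₁ hzp₂ w
      _ ≤ ε := by linarith
  · have hGz : Gfun d K₁ K₂ h₁ h₂ z w = 0 :=
      Function.notMem_support.1 fun hw' => hw (Set.mem_biUnion (Set.mem_image_of_mem _ hz) hw')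
    simpa [cutoffProd, hGz, Set.indicator_of_notMem hw] using hε

end KernelClass

theorem statement9_general
    {d : ℕ}
    (D : Set (Ed2 d)) (hDb : Bornology.IsBounded D)
    (K₁ K₂ : Ed d → ℝ)
    (hK₁b : ∃ C, ∀ v, |K₁ v| ≤ C) (hK₂b : ∃ C, ∀ v, |K₂ v| ≤ C)
    (L₁ L₂ : ℝ) (hL₁ : 0 ≤ L₁) (hL₂ : 0 ≤ L₂)
    (hK₁lip : ∀ v w : Ed d, |K₁ v - K₁ w| ≤ L₁ * ⨆ i, |v i - w i|)
    (hK₂lip : ∀ v w : Ed d, |K₂ v - K₂ w| ≤ L₂ * ⨆ i, |v i - w i|)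
    (h₁ h₂ : ℝ) (hh₁ : h₁ ∈ Set.Ioo (0 : ℝ) 1) (hh₂ : h₂ ∈ Set.Ioo (0 : ℝ) 1)
    (f : Ed2 d → ℝ)
    (hSf : 0 < Sf d K₁ K₂ h₁ h₂ D f)
    (ε : ℝ) (hε : 0 < ε) :
    ∃ F : Finset (Ed2 d → ℝ),
      (∀ φ ∈ F, ∃ C, ∀ z, |φ z| ≤ C) ∧
      (F.card : ℝ) ≤
        max 1 ((2 * LK d K₁ K₂ L₁ L₂ * Sf d K₁ K₂ h₁ h₂ D f * (h₁⁻¹ + h₂⁻¹) *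
          diamE d D / ε) ^ (2 * d)) ∧
      ∀ g ∈ Gclass d K₁ K₂ h₁ h₂ D, ∃ φ ∈ F, ∀ z, |f z * g z - φ z| ≤ ε := by
  classical
  set X := 2 * LK d K₁ K₂ L₁ L₂ * Sf d K₁ K₂ h₁ h₂ D f * (h₁⁻¹ + h₂⁻¹) * diamE d D / ε with hX
  obtain ⟨m, hm, hXm, hmX⟩ := exists_nat_pos_half_le_pow_le_max X (2 * d)
  let coords : Ed2 d → Fin d ⊕ Fin d → ℝ := fun z => Sum.elim (z.1 ·) (z.2 ·)
  let centre : (Fin d ⊕ Fin d → ℝ) → Ed2 d := fun y =>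
    (WithLp.toLp 2 (y ∘ Sum.inl), WithLp.toLp 2 (y ∘ Sum.inr))
  obtain ⟨T, hTcard, hT⟩ := exists_finset_card_le_forall_abs_sub_le
    (coords '' (D ∩ ratPoints d)) (Δ := diamE d D)
    (by rintro _ ⟨z, hz, rfl⟩ _ ⟨w, hw, rfl⟩ (i | i)
        exacts [(abs_coord_sub_le_diamE hDb hz.1 hw.1 i).1,
          (abs_coord_sub_le_diamE hDb hz.1 hw.1 i).2]) hm
  refine ⟨T.image fun y => cutoffProd d K₁ K₂ h₁ h₂ D f (centre y), ?_, ?_, ?_⟩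
  · simp only [Finset.mem_image]
    rintro _ ⟨y, -, rfl⟩
    exact ⟨_, abs_cutoffProd_le hK₁b hK₂b hSf (centre y)⟩
  · calc ((T.image _).card : ℝ) ≤ T.card := Nat.cast_le.2 Finset.card_image_le
      _ ≤ (m : ℝ) ^ (2 * d) := by
        exact_mod_cast hTcard.trans_eq (by simp [two_mul])
      _ ≤ _ := hmX
  · rintro _ ⟨z, hz, rfl⟩
    obtain ⟨y, hyT, hy⟩ := hT (coords z) ⟨z, hz, rfl⟩
    have hm' : (0 : ℝ) < m := Nat.cast_pos.2 hm
    refine ⟨_, Finset.mem_image_of_mem _ hyT, abs_mul_Gfun_sub_cutoffProd_le hK₁b hK₂b hL₁ hL₂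
      hK₁lip hK₂lip hh₁.1 hh₂.1 hSf hε.le (div_nonneg (diamE_nonneg d D) hm'.le) ?_ hz
      (fun i => hy (.inl i)) (fun i => hy (.inr i))⟩
    calc LK d K₁ K₂ L₁ L₂ * (h₁⁻¹ + h₂⁻¹) * (diamE d D / m) * Sf d K₁ K₂ h₁ h₂ D f
        = X / 2 * ε / m := by rw [hX]; field_simp
      _ ≤ m * ε / m := by gcongr
      _ = ε := by field_simp

/-- Lemma (sup-norm covering numbers of the class `𝒢f`). -/
theorem statement9
    {d : ℕ} (hd : 1 ≤ d)
    (D : Set (Ed2 d)) (hDb : Bornology.IsBounded D)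
    (K₁ K₂ : Ed d → ℝ)
    (hK₁b : ∃ C, ∀ v, |K₁ v| ≤ C) (hK₂b : ∃ C, ∀ v, |K₂ v| ≤ C)
    (hK₁c : HasCompactSupport K₁) (hK₂c : HasCompactSupport K₂)
    (L₁ L₂ : ℝ) (hL₁ : 0 ≤ L₁) (hL₂ : 0 ≤ L₂)
    (hK₁lip : ∀ v w : Ed d, |K₁ v - K₁ w| ≤ L₁ * ⨆ i, |v i - w i|)
    (hK₂lip : ∀ v w : Ed d, |K₂ v - K₂ w| ≤ L₂ * ⨆ i, |v i - w i|)
    (h₁ h₂ : ℝ) (hh₁ : h₁ ∈ Set.Ioo (0 : ℝ) 1) (hh₂ : h₂ ∈ Set.Ioo (0 : ℝ) 1)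
    (f : Ed2 d → ℝ)
    (hfloc : ∀ C : Set (Ed2 d), Bornology.IsBounded C → ∃ M, ∀ z ∈ C, |f z| ≤ M)
    (hSf : 0 < Sf d K₁ K₂ h₁ h₂ D f)
    (ε : ℝ) (hε : 0 < ε) :
    ∃ F : Finset (Ed2 d → ℝ),
      (∀ φ ∈ F, ∃ C, ∀ z, |φ z| ≤ C) ∧
      (F.card : ℝ) ≤
        max 1 ((2 * LK d K₁ K₂ L₁ L₂ * Sf d K₁ K₂ h₁ h₂ D f * (h₁⁻¹ + h₂⁻¹) *
          diamE d D / ε) ^ (2 * d)) ∧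
      ∀ g ∈ Gclass d K₁ K₂ h₁ h₂ D, ∃ φ ∈ F, ∀ z, |f z * g z - φ z| ≤ ε :=
  statement9_general D hDb K₁ K₂ hK₁b hK₂b L₁ L₂ hL₁ hL₂ hK₁lip hK₂lip h₁ h₂ hh₁ hh₂ f hSf ε hε
end
end

section
/- Let d ≥ 1 be an integer. For all s ∈ (0,1] and all x₁, x₂, y₁, y₂ ∈ ℝ^d (with the Euclidean norm): ‖y₁−y₂‖²/(4s) + 3‖x₂−x₁−s(y₁+y₂)/2‖²/s³ ≥ (‖x₂−x₁‖² + ‖y₂−y₁‖²)/(8s) − (3/4)‖y₁+y₂‖². -/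
open MeasureTheory ProbabilityTheory Filter Set

noncomputable section

/-!
Write `a = x₂ - x₁`, `w = y₁ + y₂`. Since `a = (a - (s/2) w) + (s/2) w`, the triangle inequality
gives `‖a‖² ≤ 2‖a - (s/2) w‖² + (s²/2)‖w‖²`. Dividing by `8s`, the first term is at most
`3‖a - (s/2) w‖²/s³` and the second at most `(3/4)‖w‖²` because `s ≤ 1`; the `y₁ - y₂` term on
the left is half the one on the right.
-/

lemma norm_sq_le_two_mul_norm_sub_smul_sq_add {E : Type*} [SeminormedAddCommGroup E]
    [NormedSpace ℝ E] (a w : E) (c : ℝ) :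
    ‖a‖ ^ 2 ≤ 2 * ‖a - c • w‖ ^ 2 + 2 * c ^ 2 * ‖w‖ ^ 2 := by
  have htri : ‖a‖ ≤ ‖a - c • w‖ + |c| * ‖w‖ := by
    simpa [norm_smul] using norm_add_le (a - c • w) (c • w)
  calc ‖a‖ ^ 2 ≤ (‖a - c • w‖ + |c| * ‖w‖) ^ 2 := by gcongr
    _ ≤ 2 * (‖a - c • w‖ ^ 2 + (|c| * ‖w‖) ^ 2) := add_sq_le
    _ = 2 * ‖a - c • w‖ ^ 2 + 2 * c ^ 2 * ‖w‖ ^ 2 := by rw [mul_pow, sq_abs]; ring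

theorem statement13_general (d : ℕ) (s : ℝ) (hs : s ∈ Set.Ioc (0 : ℝ) 1)
    (x₁ x₂ y₁ y₂ : Ed d) :
    (‖x₂ - x₁‖ ^ 2 + ‖y₂ - y₁‖ ^ 2) / (8 * s) - (3 / 4) * ‖y₁ + y₂‖ ^ 2 ≤
      ‖y₁ - y₂‖ ^ 2 / (4 * s) + 3 * ‖x₂ - x₁ - (s / 2) • (y₁ + y₂)‖ ^ 2 / s ^ 3 := by
  obtain ⟨hs0, hs1⟩ := hs
  set A := ‖x₂ - x₁ - (s / 2) • (y₁ + y₂)‖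
  set B := ‖y₁ + y₂‖
  set Y := ‖y₁ - y₂‖
  have hsplit := norm_sq_le_two_mul_norm_sub_smul_sq_add (x₂ - x₁) (y₁ + y₂) (s / 2)
  have hA : A ^ 2 / (4 * s) ≤ 3 * A ^ 2 / s ^ 3 := by
    rw [div_le_div_iff₀ (by positivity) (by positivity)]
    have hs3 : s ^ 3 ≤ 12 * s := by nlinarith
    linarith [mul_le_mul_of_nonneg_left hs3 (sq_nonneg A)]
  have hB : s / 16 * B ^ 2 ≤ 3 / 4 * B ^ 2 :=
    mul_le_mul_of_nonneg_right (by linarith) (sq_nonneg B)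
  have hY : Y ^ 2 / (8 * s) ≤ Y ^ 2 / (4 * s) := by gcongr; norm_num
  calc (‖x₂ - x₁‖ ^ 2 + ‖y₂ - y₁‖ ^ 2) / (8 * s) - 3 / 4 * B ^ 2
      ≤ (2 * A ^ 2 + 2 * (s / 2) ^ 2 * B ^ 2 + Y ^ 2) / (8 * s) - 3 / 4 * B ^ 2 := by
        rw [norm_sub_rev y₂]; gcongr
    _ = A ^ 2 / (4 * s) + s / 16 * B ^ 2 + Y ^ 2 / (8 * s) - 3 / 4 * B ^ 2 := by
        field_simp; ring
    _ ≤ Y ^ 2 / (4 * s) + 3 * A ^ 2 / s ^ 3 := by linarith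

theorem statement13 (d : ℕ) (hd : 1 ≤ d) (s : ℝ) (hs : s ∈ Set.Ioc (0 : ℝ) 1)
    (x₁ x₂ y₁ y₂ : Ed d) :
    (‖x₂ - x₁‖ ^ 2 + ‖y₂ - y₁‖ ^ 2) / (8 * s) - (3 / 4) * ‖y₁ + y₂‖ ^ 2 ≤
      ‖y₁ - y₂‖ ^ 2 / (4 * s) + 3 * ‖x₂ - x₁ - (s / 2) • (y₁ + y₂)‖ ^ 2 / s ^ 3 :=
  statement13_general d s hs x₁ x₂ y₁ y₂
end
end

section
/- Let d ≥ 1 be an integer, let 𝗒 ∈ ℝ^d with ‖𝗒‖ > 0, let 𝗑 ∈ ℝ^d, and let s₁ > 0 and 0 < s₂ ≤ ‖𝗒‖/2. Then for all x′, x″, y′, y″ ∈ ℝ^d with ‖x′−𝗑‖ < s₁, ‖x″−𝗑‖ < s₁, ‖y′−𝗒‖ < s₂, ‖y″−𝗒‖ < s₂, and every s ≥ 288 s₁/‖𝗒‖ with s > 0: ‖y′−y″‖²/(4s) + 3‖x″−x′−s(y′+y″)/2‖²/s³ ≥ ‖𝗒‖²/(16 s). -/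
open Real

noncomputable section

/-- Lower bound for the heat kernel exponent on a product of balls with velocity
bounded away from zero. -/
theorem statement15 (d : ℕ) (hd : 1 ≤ d) (xc yc : Ed d) (hyc : 0 < ‖yc‖)
    (s₁ s₂ : ℝ) (hs₁ : 0 < s₁) (hs₂ : 0 < s₂) (hs₂' : s₂ ≤ ‖yc‖ / 2)
    (x' x'' y' y'' : Ed d)
    (hx' : ‖x' - xc‖ < s₁) (hx'' : ‖x'' - xc‖ < s₁)
    (hy' : ‖y' - yc‖ < s₂) (hy'' : ‖y'' - yc‖ < s₂)
    (s : ℝ) (hs : 0 < s) (hs' : 288 * s₁ / ‖yc‖ ≤ s) :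
    ‖yc‖ ^ 2 / (16 * s) ≤
      ‖y' - y''‖ ^ 2 / (4 * s) + 3 * ‖x'' - x' - (s / 2) • (y' + y'')‖ ^ 2 / s ^ 3 := by
  have hs₁' : 288 * s₁ ≤ s * ‖yc‖ := by
    have := (div_le_iff₀ hyc).mp hs'
    linarith
  -- norm of y'+y''
  have hsum : ‖yc‖ ≤ ‖y' + y''‖ := by
    have h1 : ‖(2 : ℝ) • yc‖ ≤ ‖y' + y''‖ + ‖(y' - yc) + (y'' - yc)‖ := by
      have heq : (2 : ℝ) • yc = (y' + y'') - ((y' - yc) + (y'' - yc)) := by module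
      rw [heq]
      exact norm_sub_le _ _
    have h2 : ‖(y' - yc) + (y'' - yc)‖ ≤ ‖y' - yc‖ + ‖y'' - yc‖ := norm_add_le _ _
    have h3 : ‖(2 : ℝ) • yc‖ = 2 * ‖yc‖ := by
      rw [norm_smul]; simp
    nlinarith
  -- lower bound on the drift term
  set A := ‖x'' - x' - (s / 2) • (y' + y'')‖ with hA
  have hAlb : s * ‖yc‖ / 2 - 2 * s₁ ≤ A := by
    have h1 : ‖(s / 2) • (y' + y'')‖ ≤ ‖x'' - x'‖ + A := by
      have heq : (s / 2) • (y' + y'') = (x'' - x') - (x'' - x' - (s / 2) • (y' + y'')) := by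
        module
      rw [heq]
      exact norm_sub_le _ _
    have h2 : ‖x'' - x'‖ ≤ 2 * s₁ := by
      have := norm_sub_le (x'' - xc) (x' - xc)
      have heq : (x'' - xc) - (x' - xc) = x'' - x' := by module
      rw [heq] at this
      linarith
    have h3 : ‖(s / 2) • (y' + y'')‖ = (s / 2) * ‖y' + y''‖ := by
      rw [norm_smul, Real.norm_eq_abs, abs_of_pos (by positivity)]
    nlinarith
  have hA71 : 71 / 144 * (s * ‖yc‖) ≤ A := by nlinarith
  have hA0 : 0 ≤ A := norm_nonneg _
  have hAsq : (71 / 144) ^ 2 * (s * ‖yc‖) ^ 2 ≤ A ^ 2 := by nlinarith [mul_pos hs hyc]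
  have hy2 : 0 ≤ ‖y' - y''‖ ^ 2 / (4 * s) := by positivity
  have key : ‖yc‖ ^ 2 / (16 * s) ≤ 3 * A ^ 2 / s ^ 3 := by
    rw [div_le_div_iff₀ (by positivity) (by positivity)]
    nlinarith [sq_nonneg s, sq_nonneg ‖yc‖, mul_pos hs hs]
  linarith
end
end
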